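/- There is a constant c > 0 depending only on n with the following property. For every integer k ≥ 0, every t₀ ∈ ℝ, x₀ ∈ ℝⁿ, and every unit vector ω ∈ ℝⁿ with ω·e₁ ≥ cos(π/8), there exists a blue wave ψ of frequency 2^k with M(ψ) = 1 such that for every t with |t − t₀| ≤ 2^k one has ∫_{{x ∈ ℝⁿ : |x − x₀ − ω(t − t₀)| ≤ 1}} |ψ(t,x)|² dx ≥ c. (That is, a blue wave of frequency 2^k can concentrate its mass on the 1 × 2^k tube T_{t₀,x₀,ω,k}.) -/

import Mathlib

open MeasureTheory Real Set
open scoped RealInnerProductSpace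

noncomputable section

abbrev Spc (n : ℕ) := EuclideanSpace ℝ (Fin n)

/-- The first standard basis vector of ℝⁿ. -/
def e1 (n : ℕ) : Spc n :=
  (EuclideanSpace.equiv (Fin n) ℝ).symm (fun i => if (i : ℕ) = 0 then 1 else 0)

/-- Frequency support region for red waves of frequency 1. -/
def redSet (n : ℕ) : Set (Spc n) :=
  {ξ | 1 ≤ ‖ξ‖ ∧ ‖ξ‖ ≤ 2 ∧ (inner ℝ ξ (e1 n) : ℝ) ≥ ‖ξ‖ * Real.cos (π / 8)}

/-- Frequency support region for blue waves of frequency 2^k. -/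
def blueSet (n k : ℕ) : Set (Spc n) :=
  {ξ | (2 : ℝ) ^ k ≤ ‖ξ‖ ∧ ‖ξ‖ ≤ 2 ^ (k + 1) ∧ (inner ℝ ξ (e1 n) : ℝ) ≥ ‖ξ‖ * Real.cos (π / 8)}

/-- The wave with Fourier data `fp` on the upper cone and `fm` on the lower cone. -/
def wave (n : ℕ) (fp fm : Spc n → ℂ) : ℝ × Spc n → ℂ := fun p =>
  (∫ ξ : Spc n, fp ξ * Complex.exp (2 * π * Complex.I * ((p.1 * ‖ξ‖ + (inner ℝ p.2 ξ : ℝ) : ℝ) : ℂ))) +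
  (∫ ξ : Spc n, fm ξ * Complex.exp (2 * π * Complex.I * ((-(p.1 * ‖ξ‖) + (inner ℝ p.2 ξ : ℝ) : ℝ) : ℂ)))

/-- The mass of a wave with data `(fp, fm)`. -/
def mass (n : ℕ) (fp fm : Spc n → ℂ) : ℝ :=
  (∫ ξ : Spc n, ‖fp ξ‖ ^ 2) + (∫ ξ : Spc n, ‖fm ξ‖ ^ 2)

/-- `fp` is admissible data for a red wave of frequency 1. -/
def IsRedData (n : ℕ) (fp : Spc n → ℂ) : Prop :=
  Integrable fp ∧ MemLp fp 2 ∧ ∀ ξ, ξ ∉ redSet n → fp ξ = 0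

/-- `fm` is admissible data for a blue wave of frequency `2^k`. -/
def IsBlueData (n k : ℕ) (fm : Spc n → ℂ) : Prop :=
  Integrable fm ∧ MemLp fm 2 ∧ ∀ ξ, ξ ∉ blueSet n k → fm ξ = 0

/-- Axis-parallel spacetime cube of sidelength `R` centred at `(t₀, x₀)`. -/
def cube (n : ℕ) (t₀ : ℝ) (x₀ : Spc n) (R : ℝ) : Set (ℝ × Spc n) :=
  {p | |p.1 - t₀| ≤ R / 2 ∧ ∀ i, |p.2 i - x₀ i| ≤ R / 2}

/-- `ω` is an admissible tube direction. -/
def IsDir (n : ℕ) (ω : Spc n) : Prop :=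
  ‖ω‖ = 1 ∧ (inner ℝ ω (e1 n) : ℝ) ≥ Real.cos (π / 8)

/-- The `1 × 2^k` tube in direction `(1, ω)`. -/
def tube (n : ℕ) (t₀ : ℝ) (x₀ ω : Spc n) (k : ℕ) : Set (ℝ × Spc n) :=
  {p | |p.1 - t₀| ≤ 2 ^ k ∧ ‖p.2 - x₀ - (p.1 - t₀) • ω‖ ≤ 1}

/-- The infinite tube of radius `r` in direction `(1, ω)`. -/
def tubeR (n : ℕ) (t₀ : ℝ) (x₀ ω : Spc n) (r : ℝ) : Set (ℝ × Spc n) :=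
  {p | ‖p.2 - x₀ - (p.1 - t₀) • ω‖ ≤ r}

/-- The infinite tube in direction `(1, ω)`. -/
def infTube (n : ℕ) (t₀ : ℝ) (x₀ ω : Spc n) : Set (ℝ × Spc n) :=
  tubeR n t₀ x₀ ω 1

/-- Euclidean distance on spacetime `ℝ^{1+n}`. -/
def edist1n (n : ℕ) (p q : ℝ × Spc n) : ℝ :=
  Real.sqrt ((p.1 - q.1) ^ 2 + ‖p.2 - q.2‖ ^ 2)

/-- Euclidean distance from a point to a set in spacetime. -/
def distToSet (n : ℕ) (p : ℝ × Spc n) (S : Set (ℝ × Spc n)) : ℝ :=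
  ⨅ q : S, edist1n n p (q : ℝ × Spc n)

/-- The margin of a red wave of frequency 1 with data `fp`. -/
def margin (n : ℕ) (fp : Spc n → ℂ) : ℝ :=
  ⨅ ξ : Function.support fp, ⨅ ζ : {ζ : Spc n // ζ ∉ redSet n},
    edist1n n (‖(ξ : Spc n)‖, (ξ : Spc n)) (‖(ζ : Spc n)‖, (ζ : Spc n))

/-- `sup {‖φ(t,x)‖ : (t,x) ∈ Ω}`, with the convention `sup ∅ = 0`. -/
def supOn (n : ℕ) (φ : ℝ × Spc n → ℂ) (Ω : Set (ℝ × Spc n)) (t : ℝ) : ℝ :=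
  sSup {r | ∃ x : Spc n, (t, x) ∈ Ω ∧ r = ‖φ (t, x)‖}

/-!
The wave is a single packet: the indicator of a ball of radius `1/100` around a frequency `ξ₀`
of size `≈ (3/2)·2ᵏ` in direction `≈ ω`, modulated to sit at `(t₀, x₀)` and normalised to mass one.
Along the tube the phase `-(t - t₀)|ξ| + (x - x₀)·ξ` moves by less than `1/6` over the ball:
its linear part in `ξ - ξ₀` is `(x - x₀ - (t - t₀)ω)·(ξ - ξ₀)`, controlled by the tube radius,
and the curvature of the cone costs only `|t - t₀|·|ξ - ξ₀|²/|ξ₀| = O(1)`. Hence the frequency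
integral does not cancel, `|ψ(t, x)| ≥ (vol B)^{1/2}/2` on the whole cross-section of the tube,
and integrating over the unit ball gives the bound.
-/

section InnerProduct

variable {E : Type*} [NormedAddCommGroup E] [InnerProductSpace ℝ E]

theorem abs_norm_add_sub_norm_sub_inner_le {a : E} (ha : a ≠ 0) (ζ : E) :
    |‖a + ζ‖ - ‖a‖ - ⟪a, ζ⟫ / ‖a‖| ≤ ‖ζ‖ ^ 2 / (2 * ‖a‖) := by
  have hsq : (‖a + ζ‖ - ‖a‖) ^ 2 ≤ ‖ζ‖ ^ 2 := by
    rw [← sq_abs]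
    gcongr
    simpa using abs_norm_sub_norm_le (a + ζ) a
  have hid : ‖a + ζ‖ - ‖a‖ - ⟪a, ζ⟫ / ‖a‖ = (‖ζ‖ ^ 2 - (‖a + ζ‖ - ‖a‖) ^ 2) / (2 * ‖a‖) := by
    field_simp
    linear_combination norm_add_sq_real a ζ
  rw [hid, abs_div, abs_of_pos (by positivity : (0 : ℝ) < 2 * ‖a‖)]
  gcongr
  rw [abs_le]
  constructor <;> linarith [sq_nonneg (‖a + ζ‖ - ‖a‖), sq_nonneg ‖ζ‖]

theorem norm_inv_norm_smul_sub_le {u ω : E} (hω : ‖ω‖ = 1) {r : ℝ} (hr : 0 < r) :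
    ‖‖u‖⁻¹ • u - ω‖ ≤ 2 * ‖u - r • ω‖ / r := by
  have hrω : ‖r • ω‖ = r := by rw [norm_smul, hω, Real.norm_of_nonneg hr.le, mul_one]
  have hscale : ‖(‖u‖⁻¹ - r⁻¹) • u‖ ≤ ‖u - r • ω‖ / r := by
    rcases eq_or_ne u 0 with rfl | hu
    · simp only [smul_zero, norm_zero]; positivity
    have hu' : 0 < ‖u‖ := norm_pos_iff.mpr hu
    rw [norm_smul, Real.norm_eq_abs, ← abs_of_pos hu', ← abs_mul, abs_of_pos hu',
      show (‖u‖⁻¹ - r⁻¹) * ‖u‖ = (r - ‖u‖) / r by field_simp, abs_div, abs_of_pos hr]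
    nth_rewrite 1 [← hrω]
    gcongr
    simpa [abs_sub_comm] using abs_norm_sub_norm_le u (r • ω)
  calc ‖‖u‖⁻¹ • u - ω‖ = ‖(‖u‖⁻¹ - r⁻¹) • u + r⁻¹ • (u - r • ω)‖ := by
        rw [smul_sub, smul_smul, inv_mul_cancel₀ hr.ne', one_smul, sub_smul]; abel_nf
    _ ≤ ‖u - r • ω‖ / r + ‖u - r • ω‖ / r := by
        refine (norm_add_le _ _).trans (add_le_add hscale ?_)
        rw [norm_smul, Real.norm_of_nonneg (inv_nonneg.mpr hr.le), inv_mul_eq_div]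
    _ = 2 * ‖u - r • ω‖ / r := by ring

theorem abs_norm_add_sub_norm_sub_inner_le_of_norm_eq_one {a ω : E} (hω : ‖ω‖ = 1) (ha : a ≠ 0)
    {r : ℝ} (hr : 0 < r) (ζ : E) :
    |‖a + ζ‖ - ‖a‖ - ⟪ω, ζ⟫| ≤ ‖ζ‖ ^ 2 / (2 * ‖a‖) + 2 * ‖a - r • ω‖ / r * ‖ζ‖ := by
  have hsplit : ‖a + ζ‖ - ‖a‖ - ⟪ω, ζ⟫
      = (‖a + ζ‖ - ‖a‖ - ⟪a, ζ⟫ / ‖a‖) + ⟪‖a‖⁻¹ • a - ω, ζ⟫ := by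
    rw [inner_sub_left, real_inner_smul_left]; ring
  rw [hsplit]
  refine (abs_add_le _ _).trans (add_le_add (abs_norm_add_sub_norm_sub_inner_le ha ζ) ?_)
  exact (abs_real_inner_le_norm _ _).trans
    (mul_le_mul_of_nonneg_right (norm_inv_norm_smul_sub_le hω hr) (norm_nonneg ζ))

theorem closedBall_subset_cone {e ω : E} {q r a δ : ℝ} (he : ‖e‖ = 1) (hω : ‖ω‖ = 1)
    (hωe : q ≤ ⟪ω, e⟫) (hq : 0 ≤ q) (hr : 0 ≤ r) (ha : 0 ≤ a) (hmargin : (a + δ) * q + δ ≤ a) :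
    Metric.closedBall (r • ω + a • e) δ ⊆ {ξ | ‖ξ‖ * q ≤ ⟪ξ, e⟫} := by
  intro ξ hξ
  rw [Metric.mem_closedBall, dist_eq_norm] at hξ
  have hnorm : ‖ξ‖ ≤ r + a + δ := by
    calc ‖ξ‖ ≤ ‖r • ω + a • e‖ + ‖ξ - (r • ω + a • e)‖ := norm_le_norm_add_norm_sub' _ _
      _ ≤ r + a + δ := by
        gcongr
        refine (norm_add_le _ _).trans_eq ?_
        rw [norm_smul, norm_smul, hω, he, Real.norm_of_nonneg hr, Real.norm_of_nonneg ha]; ring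
  have hinner : r * q + a - δ ≤ ⟪ξ, e⟫ := by
    have hdev : -δ ≤ ⟪ξ - (r • ω + a • e), e⟫ := by
      have := abs_real_inner_le_norm (ξ - (r • ω + a • e)) e
      rw [he, mul_one] at this
      linarith [neg_abs_le ⟪ξ - (r • ω + a • e), e⟫]
    have hsplit : ⟪ξ, e⟫ = r * ⟪ω, e⟫ + a + ⟪ξ - (r • ω + a • e), e⟫ := by
      rw [inner_sub_left, inner_add_left, real_inner_smul_left, real_inner_smul_left,
        real_inner_self_eq_norm_sq, he]; ring
    nlinarith
  show ‖ξ‖ * q ≤ ⟪ξ, e⟫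
  nlinarith

end InnerProduct

theorem norm_exp_two_pi_I_mul (x : ℝ) : ‖Complex.exp (2 * π * Complex.I * x)‖ = 1 := by
  rw [show 2 * π * Complex.I * x = ((2 * π * x : ℝ) : ℂ) * Complex.I by push_cast; ring]
  exact Complex.norm_exp_ofReal_mul_I _

theorem measureReal_div_two_le_norm_setIntegral_exp {α : Type*} [MeasurableSpace α]
    {μ : Measure α} {B : Set α} {θ : α → ℝ} {c : ℝ} (hB : MeasurableSet B) (hμB : μ B ≠ ⊤)
    (hθ : Measurable θ) (hθc : ∀ ξ ∈ B, |θ ξ - c| ≤ 1 / 6) :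
    μ.real B / 2 ≤ ‖∫ ξ in B, Complex.exp (2 * π * Complex.I * θ ξ) ∂μ‖ := by
  set u := Complex.exp (2 * π * Complex.I * (-c : ℝ))
  have hexp_int : IntegrableOn (fun ξ => Complex.exp (2 * π * Complex.I * θ ξ)) B μ :=
    Measure.integrableOn_of_bounded (M := 1) hμB
      (Measurable.aestronglyMeasurable (by fun_prop))
      (ae_of_all _ fun ξ => (norm_exp_two_pi_I_mul _).le)
  have hre : ∀ ξ,
      (u * Complex.exp (2 * π * Complex.I * θ ξ)).re = Real.cos (2 * π * (θ ξ - c)) := by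
    intro ξ
    rw [← Complex.exp_add, show 2 * π * Complex.I * (-c : ℝ) + 2 * π * Complex.I * θ ξ
      = ((2 * π * (θ ξ - c) : ℝ) : ℂ) * Complex.I by push_cast; ring, Complex.exp_ofReal_mul_I_re]
  -- a phase within `1/6` of `c` turns by at most `π/3`, where the cosine is still `≥ 1/2`
  have hcos : ∀ ξ ∈ B, 1 / 2 ≤ Real.cos (2 * π * (θ ξ - c)) := by
    intro ξ hξ
    rw [← Real.cos_abs, ← Real.cos_pi_div_three]
    refine Real.cos_le_cos_of_nonneg_of_le_pi (abs_nonneg _) (by linarith [Real.pi_pos]) ?_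
    rw [abs_mul, abs_of_pos (by positivity : (0 : ℝ) < 2 * π)]
    nlinarith [hθc ξ hξ, Real.pi_pos]
  calc μ.real B / 2 = 1 / 2 * μ.real B := by ring
    _ ≤ ∫ ξ in B, Real.cos (2 * π * (θ ξ - c)) ∂μ := by
        refine setIntegral_ge_of_const_le_real hB hμB hcos ?_
        simpa only [IntegrableOn, RCLike.re_to_complex, hre] using (hexp_int.const_mul u).re
    _ = (u * ∫ ξ in B, Complex.exp (2 * π * Complex.I * θ ξ) ∂μ).re := by
        rw [← integral_const_mul, ← RCLike.re_to_complex, ← integral_re (hexp_int.const_mul u)]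
        simp only [RCLike.re_to_complex, hre]
    _ ≤ ‖∫ ξ in B, Complex.exp (2 * π * Complex.I * θ ξ) ∂μ‖ := by
        refine (Complex.re_le_norm _).trans_eq ?_
        rw [norm_mul, norm_exp_two_pi_I_mul, one_mul]

section WavePacket

variable {n : ℕ} {B : Set (Spc n)} {A t₀ : ℝ} {x₀ : Spc n}

/-- The modulation `e^{2πi(t₀|ξ| - x₀·ξ)}` moves the wave from the origin to `(t₀, x₀)`. -/
def wavePacket (n : ℕ) (B : Set (Spc n)) (A t₀ : ℝ) (x₀ : Spc n) : Spc n → ℂ :=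
  B.indicator fun ξ => A * Complex.exp (2 * π * Complex.I * (t₀ * ‖ξ‖ - ⟪x₀, ξ⟫ : ℝ))

theorem norm_wavePacket_sq :
    (fun ξ => ‖wavePacket n B A t₀ x₀ ξ‖ ^ 2) = B.indicator fun _ => A ^ 2 := by
  ext ξ
  by_cases hξ : ξ ∈ B
  · rw [wavePacket, Set.indicator_of_mem hξ, Set.indicator_of_mem hξ, norm_mul,
      norm_exp_two_pi_I_mul, Complex.norm_real, Real.norm_eq_abs, mul_one, sq_abs]
  · simp [wavePacket, hξ]

theorem mass_zero_wavePacket (hB : MeasurableSet B) :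
    mass n 0 (wavePacket n B A t₀ x₀) = A ^ 2 * volume.real B := by
  simp only [mass, Pi.zero_apply, norm_zero]
  rw [norm_wavePacket_sq, integral_indicator hB, setIntegral_const, smul_eq_mul]
  simp [mul_comm]

theorem isBlueData_wavePacket {k : ℕ} (hB : IsCompact B) (hBk : B ⊆ blueSet n k) :
    IsBlueData n k (wavePacket n B A t₀ x₀) := by
  have hint : Integrable (wavePacket n B A t₀ x₀) :=
    (Continuous.continuousOn (by fun_prop)).integrableOn_compact hB
      |>.integrable_indicator hB.measurableSet
  refine ⟨hint, ?_, fun ξ hξ => Set.indicator_of_notMem (fun h => hξ (hBk h)) _⟩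
  rw [memLp_two_iff_integrable_sq_norm hint.aestronglyMeasurable, norm_wavePacket_sq]
  exact (integrableOn_const hB.measure_lt_top.ne).integrable_indicator hB.measurableSet

theorem wave_zero_wavePacket (hB : MeasurableSet B) (t : ℝ) (x : Spc n) :
    wave n 0 (wavePacket n B A t₀ x₀) (t, x) =
      A * ∫ ξ in B, Complex.exp (2 * π * Complex.I * (-((t - t₀) * ‖ξ‖) + ⟪x - x₀, ξ⟫ : ℝ)) := by
  simp only [wave, Pi.zero_apply, zero_mul, integral_zero, zero_add]
  rw [← integral_const_mul, ← integral_indicator hB]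
  congr 1 with ξ
  by_cases hξ : ξ ∈ B
  · simp only [wavePacket, Set.indicator_of_mem hξ, mul_assoc, ← Complex.exp_add]
    congr 2
    rw [inner_sub_left]; push_cast; ring
  · simp [wavePacket, hξ]

end WavePacket

section BlueCenter

variable {n k : ℕ} {ω : Spc n}

theorem IsDir.dim_pos (hω : IsDir n ω) : 0 < n := by
  rcases Nat.eq_zero_or_pos n with rfl | hn
  · have h := hω.1
    rw [Subsingleton.elim ω 0, norm_zero] at h
    exact absurd h zero_ne_one
  · exact hn

theorem norm_e1 (hn : 0 < n) : ‖e1 n‖ = 1 := by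
  have he1 : e1 n = EuclideanSpace.single (⟨0, hn⟩ : Fin n) (1 : ℝ) := by
    ext i
    simp [e1, EuclideanSpace.equiv, Fin.ext_iff]
  rw [he1, PiLp.norm_single, norm_one]

theorem cos_pi_div_eight_le : Real.cos (π / 8) ≤ 14 / 15 := by
  rw [Real.cos_pi_div_eight, div_le_iff₀ two_pos]
  have hsqrt2 : √2 ≤ 37 / 25 := Real.sqrt_le_iff.mpr ⟨by norm_num, by norm_num⟩
  exact Real.sqrt_le_iff.mpr ⟨by norm_num, by nlinarith⟩

/-- Pushing the centre by `2/5` towards `e₁` keeps the whole ball inside the cone even when `ω`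
lies on its boundary; the tilt is `O(2⁻ᵏ)`, which costs only `O(1)` phase along the tube. -/
def blueCenter (n k : ℕ) (ω : Spc n) : Spc n :=
  ((3 / 2 : ℝ) * 2 ^ k) • ω + (2 / 5 : ℝ) • e1 n

theorem norm_blueCenter_sub (hω : IsDir n ω) :
    ‖blueCenter n k ω - ((3 / 2 : ℝ) * 2 ^ k) • ω‖ = 2 / 5 := by
  rw [blueCenter, add_sub_cancel_left, norm_smul, norm_e1 hω.dim_pos]; norm_num

theorem closedBall_blueCenter_subset_blueSet (hω : IsDir n ω) :
    Metric.closedBall (blueCenter n k ω) (1 / 100) ⊆ blueSet n k := by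
  intro ξ hξ
  have hR : (1 : ℝ) ≤ 2 ^ k := one_le_pow₀ (by norm_num)
  have hq := cos_pi_div_eight_le
  have hq0 : 0 ≤ Real.cos (π / 8) := (Real.cos_pos_of_mem_Ioo ⟨by linarith [Real.pi_pos],
    by linarith [Real.pi_pos]⟩).le
  have hcone := closedBall_subset_cone (norm_e1 hω.dim_pos) hω.1 hω.2 hq0 (by positivity)
    (by norm_num) (by nlinarith) hξ
  have hnorm : |‖ξ‖ - (3 / 2 : ℝ) * 2 ^ k| ≤ 1 / 100 + 2 / 5 := by
    have hrω : ‖((3 / 2 : ℝ) * 2 ^ k) • ω‖ = (3 / 2 : ℝ) * 2 ^ k := by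
      rw [norm_smul, hω.1, mul_one, Real.norm_of_nonneg (by positivity)]
    rw [← hrω]
    refine (abs_norm_sub_norm_le _ _).trans ?_
    refine (norm_sub_le_norm_sub_add_norm_sub _ (blueCenter n k ω) _).trans ?_
    rw [norm_blueCenter_sub hω, ← dist_eq_norm]
    exact add_le_add_left hξ _
  refine ⟨?_, ?_, hcone⟩ <;> rw [abs_le] at hnorm
  · linarith
  · rw [pow_succ]; linarith

theorem abs_phase_sub_phase_blueCenter_le (hω : IsDir n ω) {s : ℝ}
    (hs : |s| ≤ 2 ^ k) {z : Spc n} (hz : ‖z - s • ω‖ ≤ 1) {ξ : Spc n}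
    (hξ : ξ ∈ Metric.closedBall (blueCenter n k ω) (1 / 100)) :
    |(-(s * ‖ξ‖) + ⟪z, ξ⟫) - (-(s * ‖blueCenter n k ω‖) + ⟪z, blueCenter n k ω⟫)| ≤ 1 / 6 := by
  set ξ₀ := blueCenter n k ω
  set R : ℝ := 2 ^ k
  have hR : 1 ≤ R := one_le_pow₀ (by norm_num)
  have hζ : ‖ξ - ξ₀‖ ≤ 1 / 100 := by rwa [← dist_eq_norm]
  have hξ₀ : R ≤ ‖ξ₀‖ :=
    (closedBall_blueCenter_subset_blueSet hω (Metric.mem_closedBall_self (by norm_num))).1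
  have hexp := abs_norm_add_sub_norm_sub_inner_le_of_norm_eq_one hω.1
    (norm_pos_iff.mp (by linarith)) (by positivity : (0 : ℝ) < 3 / 2 * R) (ξ - ξ₀)
  rw [add_sub_cancel, norm_blueCenter_sub hω] at hexp
  -- to first order in `ξ - ξ₀` the phase only sees `z - s • ω`, which the tube keeps short
  have hsplit : (-(s * ‖ξ‖) + ⟪z, ξ⟫) - (-(s * ‖ξ₀‖) + ⟪z, ξ₀⟫)
      = -(s * (‖ξ‖ - ‖ξ₀‖ - ⟪ω, ξ - ξ₀⟫)) + ⟪z - s • ω, ξ - ξ₀⟫ := by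
    rw [inner_sub_left z, inner_sub_right z, inner_sub_right (s • ω), real_inner_smul_left,
      real_inner_smul_left, inner_sub_right ω]; ring
  have hnorm_err :
      |s * (‖ξ‖ - ‖ξ₀‖ - ⟪ω, ξ - ξ₀⟫)| ≤ (1 / 100) ^ 2 / 2 + 8 / 15 * (1 / 100) := by
    calc |s * (‖ξ‖ - ‖ξ₀‖ - ⟪ω, ξ - ξ₀⟫)|
        ≤ R * ((1 / 100) ^ 2 / (2 * R) + 2 * (2 / 5) / (3 / 2 * R) * (1 / 100)) := by
          rw [abs_mul]
          refine mul_le_mul hs (hexp.trans ?_) (abs_nonneg _) (by positivity)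
          gcongr
      _ = (1 / 100) ^ 2 / 2 + 8 / 15 * (1 / 100) := by field_simp; ring
  have htube_err : |⟪z - s • ω, ξ - ξ₀⟫| ≤ 1 / 100 :=
    (abs_real_inner_le_norm _ _).trans (by nlinarith [norm_nonneg (ξ - ξ₀)])
  rw [hsplit]
  refine (abs_add_le _ _).trans ?_
  rw [abs_neg]
  linarith

theorem le_norm_wave_zero_wavePacket_blueCenter (hω : IsDir n ω) {A t₀ t : ℝ} (hA : 0 ≤ A)
    (ht : |t - t₀| ≤ 2 ^ k) {x₀ x : Spc n} (hx : x ∈ Metric.closedBall (x₀ + (t - t₀) • ω) 1) :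
    A * volume.real (Metric.closedBall (blueCenter n k ω) (1 / 100)) / 2 ≤
      ‖wave n 0 (wavePacket n (Metric.closedBall (blueCenter n k ω) (1 / 100)) A t₀ x₀)
        (t, x)‖ := by
  rw [wave_zero_wavePacket measurableSet_closedBall, norm_mul, Complex.norm_real,
    Real.norm_of_nonneg hA, mul_div_assoc]
  gcongr
  have hz : ‖x - x₀ - (t - t₀) • ω‖ ≤ 1 := by rwa [sub_sub, ← dist_eq_norm]
  exact measureReal_div_two_le_norm_setIntegral_exp measurableSet_closedBall
    measure_closedBall_lt_top.ne (by fun_prop)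
    fun ξ hξ => abs_phase_sub_phase_blueCenter_le hω ht hz hξ

end BlueCenter

theorem blue_wave_concentrates_on_tube_general (n : ℕ) :
    ∃ c : ℝ, 0 < c ∧ ∀ (k : ℕ) (t₀ : ℝ) (x₀ ω : Spc n), IsDir n ω →
      ∃ gm : Spc n → ℂ, IsBlueData n k gm ∧ mass n 0 gm = 1 ∧
        ∀ t : ℝ, |t - t₀| ≤ 2 ^ k →
          c ≤ ∫ x in {x : Spc n | ‖x - x₀ - (t - t₀) • ω‖ ≤ 1}, ‖wave n 0 gm (t, x)‖ ^ 2 := by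
  set V := volume.real (Metric.closedBall (0 : Spc n) (1 / 100))
  have hV : 0 < V := ENNReal.toReal_pos (Metric.measure_closedBall_pos _ _ (by norm_num)).ne'
    measure_closedBall_lt_top.ne
  have hV₁ : 0 < volume.real (Metric.closedBall (0 : Spc n) 1) :=
    ENNReal.toReal_pos (Metric.measure_closedBall_pos _ _ one_pos).ne' measure_closedBall_lt_top.ne
  refine ⟨V / 4 * volume.real (Metric.closedBall (0 : Spc n) 1), by positivity, ?_⟩
  intro k t₀ x₀ ω hω
  set B := Metric.closedBall (blueCenter n k ω) (1 / 100)
  have hBV : volume.real B = V := Measure.addHaar_real_closedBall_center _ _ _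
  refine ⟨wavePacket n B (√V)⁻¹ t₀ x₀, isBlueData_wavePacket (isCompact_closedBall _ _)
    (closedBall_blueCenter_subset_blueSet hω), ?_, fun t ht => ?_⟩
  · rw [mass_zero_wavePacket measurableSet_closedBall, hBV, inv_pow, Real.sq_sqrt hV.le,
      inv_mul_cancel₀ hV.ne']
  have htube : {x : Spc n | ‖x - x₀ - (t - t₀) • ω‖ ≤ 1} =
      Metric.closedBall (x₀ + (t - t₀) • ω) 1 := by
    ext x; simp only [Set.mem_ofPred_eq, Metric.mem_closedBall, dist_eq_norm, sub_sub]
  have hcont : Continuous fun x => wave n 0 (wavePacket n B (√V)⁻¹ t₀ x₀) (t, x) := by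
    refine (continuous_const.mul (continuous_parametric_integral_of_continuous (by fun_prop)
      (isCompact_closedBall _ _))).congr
      fun x => (wave_zero_wavePacket measurableSet_closedBall t x).symm
  rw [htube, ← Measure.addHaar_real_closedBall_center volume (x₀ + (t - t₀) • ω)]
  refine setIntegral_ge_of_const_le_real measurableSet_closedBall measure_closedBall_lt_top.ne
    (fun x hx => ?_)
    ((hcont.norm.pow 2).continuousOn.integrableOn_compact (isCompact_closedBall _ _))
  have hlow := le_norm_wave_zero_wavePacket_blueCenter hω (A := (√V)⁻¹) (by positivity) ht hx
  rw [hBV, inv_mul_eq_div, Real.div_sqrt] at hlow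
  calc V / 4 = (√V / 2) ^ 2 := by rw [div_pow, Real.sq_sqrt hV.le]; norm_num
    _ ≤ _ := by gcongr

/-- A blue wave of frequency `2^k` and unit mass can concentrate on a `1 × 2^k` tube. -/
theorem blue_wave_concentrates_on_tube (n : ℕ) (hn : 2 ≤ n) :
    ∃ c : ℝ, 0 < c ∧ ∀ (k : ℕ) (t₀ : ℝ) (x₀ ω : Spc n), IsDir n ω →
      ∃ gm : Spc n → ℂ, IsBlueData n k gm ∧ mass n 0 gm = 1 ∧
        ∀ t : ℝ, |t - t₀| ≤ 2 ^ k →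
          c ≤ ∫ x in {x : Spc n | ‖x - x₀ - (t - t₀) • ω‖ ≤ 1}, ‖wave n 0 gm (t, x)‖ ^ 2 :=
  blue_wave_concentrates_on_tube_general n
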